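/- Let P be a real symmetric 3×3 matrix, let ω : ℝ → ℝ³ be continuous, and let R : ℝ → ℝ^{3×3} be differentiable with Ṙ(t) = R(t) ω̂(t) for all t. Then the function t ↦ ψ(R(t)) = ½ tr(P(I − R(t))) is differentiable with derivative d/dt ψ(R(t)) = ⟨e_R(R(t)), ω(t)⟩, where e_R(R) = vee(½(PR − RᵀP)). -/

import Mathlib

open Matrix

attribute [local instance] Matrix.normedAddCommGroup Matrix.normedSpace

/-- The vee map, inverse of the hat map on skew-symmetric matrices. -/
def vee (A : Matrix (Fin 3) (Fin 3) ℝ) : Fin 3 → ℝ :=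
  ![A 2 1, A 0 2, A 1 0]

/-- The configuration error function `ψ(R) = ½ tr(P(I − R))`. -/
noncomputable def ψ (P R : Matrix (Fin 3) (Fin 3) ℝ) : ℝ :=
  (1 / 2 : ℝ) * (P * (1 - R)).trace

/-- The attitude error vector `e_R(R) = vee(½(PR − RᵀP))`. -/
noncomputable def eR (P R : Matrix (Fin 3) (Fin 3) ℝ) : Fin 3 → ℝ :=
  vee ((1 / 2 : ℝ) • (P * R - Rᵀ * P))

/-- The hat map sending `v ∈ ℝ³` to the skew-symmetric matrix `v̂` with `v̂ w = v × w`. -/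
def hat (v : Fin 3 → ℝ) : Matrix (Fin 3) (Fin 3) ℝ :=
  !![0, -v 2, v 1; v 2, 0, -v 0; -v 1, v 0, 0]

/-! `ψ(R)` is affine in `R`, so `d/dt ψ(R) = -½ tr(P R ω̂)`. For any `A`, pairing with
the skew matrix `ω̂` sees only the skew part of `A`: `tr(A ω̂) = -⟨vee(A - Aᵀ), ω⟩`. With `A = PR`
and `P` symmetric, `(PR)ᵀ = RᵀP`, which gives `⟨e_R, ω⟩`. -/

theorem HasDerivAt.trace_mul_left {n : Type*} [Fintype n] {f : ℝ → Matrix n n ℝ}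
    {f' : Matrix n n ℝ} {t : ℝ} (A : Matrix n n ℝ) (hf : HasDerivAt f f' t) :
    HasDerivAt (fun s => (A * f s).trace) (A * f').trace t :=
  (LinearMap.toContinuousLinearMap
    ((traceLinearMap n ℝ ℝ).comp (LinearMap.mulLeft ℝ A))).hasFDerivAt.comp_hasDerivAt t hf

theorem hasDerivAt_ψ (P : Matrix (Fin 3) (Fin 3) ℝ) {R : ℝ → Matrix (Fin 3) (Fin 3) ℝ}
    {R' : Matrix (Fin 3) (Fin 3) ℝ} {t : ℝ} (hR : HasDerivAt R R' t) :
    HasDerivAt (fun s => ψ P (R s)) (-(1 / 2) * (P * R').trace) t := by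
  have hψ : (fun s => ψ P (R s)) = fun s => 1 / 2 * (P.trace - (P * R s).trace) := by
    funext s
    simp only [ψ, Matrix.mul_sub, Matrix.mul_one, trace_sub]
  rw [hψ, neg_mul, ← mul_neg]
  exact ((hR.trace_mul_left P).const_sub P.trace).const_mul (1 / 2)

theorem vee_smul (c : ℝ) (A : Matrix (Fin 3) (Fin 3) ℝ) : vee (c • A) = c • vee A := by
  ext i
  fin_cases i <;> rfl

theorem trace_mul_hat (A : Matrix (Fin 3) (Fin 3) ℝ) (w : Fin 3 → ℝ) :
    (A * hat w).trace = -(vee (A - Aᵀ) ⬝ᵥ w) := by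
  simp only [trace, diag, mul_apply, hat, vee, dotProduct, Fin.sum_univ_three, Matrix.sub_apply,
    transpose_apply, of_apply, cons_val', cons_val_zero, cons_val_one, cons_val, cons_val_fin_one]
  ring

theorem eR_dotProduct_of_isSymm {P : Matrix (Fin 3) (Fin 3) ℝ} (hP : P.IsSymm)
    (R : Matrix (Fin 3) (Fin 3) ℝ) (w : Fin 3 → ℝ) :
    eR P R ⬝ᵥ w = -(1 / 2) * (P * (R * hat w)).trace := by
  have hPR : (P * R)ᵀ = Rᵀ * P := by rw [transpose_mul, hP.eq]
  rw [← Matrix.mul_assoc, trace_mul_hat, hPR, eR, vee_smul, smul_dotProduct, smul_eq_mul]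
  ring

theorem deriv_configuration_error_general
    (P : Matrix (Fin 3) (Fin 3) ℝ) (hPsymm : P.IsSymm)
    (ω : ℝ → Fin 3 → ℝ)
    (R : ℝ → Matrix (Fin 3) (Fin 3) ℝ)
    (hR : ∀ t, HasDerivAt R (R t * hat (ω t)) t) :
    ∀ t, HasDerivAt (fun s => ψ P (R s)) (eR P (R t) ⬝ᵥ ω t) t := by
  intro t
  rw [eR_dotProduct_of_isSymm hPsymm]
  exact hasDerivAt_ψ P (hR t)

/-- If `P` is symmetric, `ω` is continuous and `Ṙ = R ω̂`, then
`d/dt ψ(R(t)) = ⟨e_R(R(t)), ω(t)⟩`. -/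
theorem deriv_configuration_error
    (P : Matrix (Fin 3) (Fin 3) ℝ) (hPsymm : P.IsSymm)
    (ω : ℝ → Fin 3 → ℝ) (hω : Continuous ω)
    (R : ℝ → Matrix (Fin 3) (Fin 3) ℝ)
    (hR : ∀ t, HasDerivAt R (R t * hat (ω t)) t) :
    ∀ t, HasDerivAt (fun s => ψ P (R s)) (eR P (R t) ⬝ᵥ ω t) t :=
  deriv_configuration_error_general P hPsymm ω R hR
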